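/- For three point vortices with intensities satisfying γ_1γ_2 + γ_2γ_3 + γ_1γ_3 = 0, there is no solution of the point vortex system in which exactly two of the three vortices collide at a finite time while the third remains at positive distance: conservation of the Hamiltonian H implies that if |x_j(t) - x_k(t)| → 0 as t → t* for exactly one pair {j,k} while the other pairwise distances stay bounded away from 0 and ∞, then H(t) → ±∞, contradicting its constancy. -/

import Mathlib

open Real Finset

noncomputable section

/-- The planar point-vortex vector field, identifying ℝ² with ℂ so that
`(a,b)^⊥ = (-b,a)` is multiplication by `Complex.I`. -/
def pvField {N : ℕ} (γ : Fin N → ℝ) (x : Fin N → ℂ) (i : Fin N) : ℂ :=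
  ((2 * Real.pi)⁻¹ : ℝ) * ∑ j ∈ Finset.univ.filter (fun j => j ≠ i),
    (γ j : ℂ) * (Complex.I * (x i - x j)) / ((‖x i - x j‖ ^ 2 : ℝ) : ℂ)

/-- `x` is a smooth solution of the point vortex ODE on `s` with pairwise
distinct positions. -/
def IsPVSolution {N : ℕ} (γ : Fin N → ℝ) (s : Set ℝ) (x : ℝ → Fin N → ℂ) : Prop :=
  (∀ t ∈ s, ∀ i j : Fin N, i ≠ j → x t i ≠ x t j) ∧
  (∀ t ∈ s, ∀ i : Fin N, HasDerivAt (fun τ => x τ i) (pvField γ (x t) i) t)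

set_option maxHeartbeats 1000000

open Filter

open Complex in
lemma re_pair (r : ℝ) (W b : ℂ) :
    ((↑r * (I * W)) * (starRingEnd ℂ) b + b * (starRingEnd ℂ) (↑r * (I * W))).re
      = 2 * r * (W.re * b.im - W.im * b.re) := by
  simp [Complex.mul_re, Complex.mul_im]
  ring

open Complex in
lemma key (γ : Fin 3 → ℝ) (z : Fin 3 → ℂ) (h01 : z 0 ≠ z 1) (h02 : z 0 ≠ z 2) (h12 : z 1 ≠ z 2) :
    γ 0 * γ 1 * ((normSq (z 0 - z 1))⁻¹ *
      ((pvField γ z 0 - pvField γ z 1) * (starRingEnd ℂ) (z 0 - z 1)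
        + (z 0 - z 1) * (starRingEnd ℂ) (pvField γ z 0 - pvField γ z 1)).re)
  + γ 1 * γ 2 * ((normSq (z 1 - z 2))⁻¹ *
      ((pvField γ z 1 - pvField γ z 2) * (starRingEnd ℂ) (z 1 - z 2)
        + (z 1 - z 2) * (starRingEnd ℂ) (pvField γ z 1 - pvField γ z 2)).re)
  + γ 0 * γ 2 * ((normSq (z 0 - z 2))⁻¹ *
      ((pvField γ z 0 - pvField γ z 2) * (starRingEnd ℂ) (z 0 - z 2)
        + (z 0 - z 2) * (starRingEnd ℂ) (pvField γ z 0 - pvField γ z 2)).re) = 0 := by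
  set u := z 0 - z 1 with hu
  set v := z 1 - z 2 with hv
  have e02 : z 0 - z 2 = u + v := by rw [hu, hv]; ring
  have e10 : z 1 - z 0 = -u := by rw [hu]; ring
  have e21 : z 2 - z 1 = -v := by rw [hv]; ring
  have e20 : z 2 - z 0 = -(u + v) := by rw [hu, hv]; ring
  have hnu : normSq u ≠ 0 := by rw [hu, Ne, Complex.normSq_eq_zero, sub_eq_zero]; exact h01
  have hnv : normSq v ≠ 0 := by rw [hv, Ne, Complex.normSq_eq_zero, sub_eq_zero]; exact h12
  have hnw : normSq (u + v) ≠ 0 := by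
    rw [← e02, Ne, Complex.normSq_eq_zero, sub_eq_zero]; exact h02
  have hπC : (Real.pi : ℂ) ≠ 0 := by exact_mod_cast Real.pi_ne_zero
  have hnuC : ((normSq u : ℝ) : ℂ) ≠ 0 := by exact_mod_cast hnu
  have hnvC : ((normSq v : ℝ) : ℂ) ≠ 0 := by exact_mod_cast hnv
  have hnwC : ((normSq (u + v) : ℝ) : ℂ) ≠ 0 := by exact_mod_cast hnw
  set W01 : ℂ := ↑((γ 0 + γ 1) * (normSq u)⁻¹) * u
      + ↑(γ 2 * (normSq (u + v))⁻¹) * (u + v) - ↑(γ 2 * (normSq v)⁻¹) * v with hW01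
  set W12 : ℂ := ↑((γ 1 + γ 2) * (normSq v)⁻¹) * v
      + ↑(γ 0 * (normSq (u + v))⁻¹) * (u + v) - ↑(γ 0 * (normSq u)⁻¹) * u with hW12
  set W02 : ℂ := ↑((γ 0 + γ 2) * (normSq (u + v))⁻¹) * (u + v)
      + ↑(γ 1 * (normSq u)⁻¹) * u + ↑(γ 1 * (normSq v)⁻¹) * v with hW02
  have d01 : pvField γ z 0 - pvField γ z 1 = ↑((2 * Real.pi)⁻¹ : ℝ) * (I * W01) := by
    simp only [pvField, Complex.sq_norm, Finset.sum_filter, Fin.sum_univ_three]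
    norm_num [Fin.ext_iff]
    rw [e10, e02, ← hu, ← hv, hW01]
    push_cast
    rw [Complex.normSq_neg]
    field_simp [hnuC, hnvC, hnwC, hπC]
    ring
  have d12 : pvField γ z 1 - pvField γ z 2 = ↑((2 * Real.pi)⁻¹ : ℝ) * (I * W12) := by
    simp only [pvField, Complex.sq_norm, Finset.sum_filter, Fin.sum_univ_three]
    norm_num [Fin.ext_iff]
    rw [e10, e20, e21, ← hv, hW12]
    push_cast
    simp only [Complex.normSq_neg]
    field_simp [hnuC, hnvC, hnwC, hπC]
    ring
  have d02 : pvField γ z 0 - pvField γ z 2 = ↑((2 * Real.pi)⁻¹ : ℝ) * (I * W02) := by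
    simp only [pvField, Complex.sq_norm, Finset.sum_filter, Fin.sum_univ_three]
    norm_num [Fin.ext_iff]
    rw [e20, e21, e02, ← hu, hW02]
    push_cast
    rw [Complex.normSq_neg, Complex.normSq_neg]
    field_simp [hnuC, hnvC, hnwC, hπC]
    ring
  rw [e02, d01, d12, d02, re_pair, re_pair, re_pair, hW01, hW12, hW02]
  simp only [Complex.add_re, Complex.add_im, Complex.sub_re, Complex.sub_im,
    Complex.mul_re, Complex.mul_im, Complex.ofReal_re, Complex.ofReal_im]
  ring

open Complex in
lemma hasDerivAt_log_normSq {w : ℝ → ℂ} {w' : ℂ} {t : ℝ} (hw : HasDerivAt w w' t)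
    (hne : w t ≠ 0) :
    HasDerivAt (fun τ => Real.log (Complex.normSq (w τ)))
      ((Complex.normSq (w t))⁻¹ *
        (w' * (starRingEnd ℂ) (w t) + w t * (starRingEnd ℂ) w').re) t := by
  have hstar : HasDerivAt (fun τ => (starRingEnd ℂ) (w τ)) ((starRingEnd ℂ) w') t := by
    simpa only [RCLike.star_def] using hw.star
  have hmul := hw.mul hstar
  have hre := Complex.reCLM.hasFDerivAt.comp_hasDerivAt t hmul
  have hns : HasDerivAt (fun τ => Complex.normSq (w τ))
      ((w' * (starRingEnd ℂ) (w t) + w t * (starRingEnd ℂ) w').re) t := by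
    simpa only [Function.comp_def, Pi.mul_apply, Complex.reCLM_apply, Complex.mul_conj, Complex.ofReal_re] using hre
  have hlog := (Real.hasDerivAt_log ((Complex.normSq_pos.2 hne).ne')).comp t hns
  simpa only [Function.comp_def] using hlog

lemma tendsto_log_normSq_atBot {w : ℝ → ℂ} {l : Filter ℝ}
    (h0 : Filter.Tendsto (fun t => ‖w t‖) l (nhds 0))
    (hne : ∀ᶠ t in l, w t ≠ 0) :
    Filter.Tendsto (fun t => Real.log (Complex.normSq (w t))) l Filter.atBot := by
  have h1 : Filter.Tendsto (fun t => Complex.normSq (w t)) l (nhds 0) := by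
    have := h0.mul h0
    simp only [mul_zero] at this
    refine this.congr fun t => ?_
    rw [Complex.normSq_eq_norm_sq, sq]
  have h2 : Filter.Tendsto (fun t => Complex.normSq (w t)) l (nhdsWithin 0 (Set.Ioi 0)) :=
    tendsto_nhdsWithin_iff.2 ⟨h1, hne.mono fun t h => Complex.normSq_pos.2 h⟩
  exact Real.tendsto_log_nhdsGT_zero.comp h2

lemma abs_log_sq_bound {m M y : ℝ} (hm : 0 < m) (h1 : m ≤ y) (h2 : y ≤ M) :
    |Real.log (y ^ 2)| ≤ max |Real.log (m ^ 2)| |Real.log (M ^ 2)| := by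
  have hy : 0 < y := hm.trans_le h1
  have l1 : Real.log (m ^ 2) ≤ Real.log (y ^ 2) :=
    Real.log_le_log (by positivity) (by nlinarith)
  have l2 : Real.log (y ^ 2) ≤ Real.log (M ^ 2) :=
    Real.log_le_log (by positivity) (by nlinarith)
  rw [abs_le]
  constructor
  · have := neg_abs_le (Real.log (m ^ 2))
    have h3 : -(max |Real.log (m ^ 2)| |Real.log (M ^ 2)|) ≤ -|Real.log (m ^ 2)| :=
      neg_le_neg (le_max_left _ _)
    linarith
  · have := le_abs_self (Real.log (M ^ 2))
    have h3 : |Real.log (M ^ 2)| ≤ max |Real.log (m ^ 2)| |Real.log (M ^ 2)| := le_max_right _ _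
    linarith

lemma logns_bound {m M : ℝ} (hm : 0 < m) {w : ℂ} (h1 : m ≤ ‖w‖)
    (h2 : ‖w‖ ≤ M) :
    |Real.log (Complex.normSq w)| ≤ max |Real.log (m ^ 2)| |Real.log (M ^ 2)| := by
  rw [← Complex.sq_norm]
  exact abs_log_sq_bound hm h1 h2

lemma endgame {a tstar : ℝ} (hat : a < tstar) {L G : ℝ → ℝ} {c C B : ℝ} (hc : c ≠ 0)
    (hFdef : ∀ t ∈ Set.Ioo a tstar, c * L t + G t = C)
    (hGbd : ∀ t ∈ Set.Ioo a tstar, |G t| ≤ B)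
    (hL : Filter.Tendsto L (nhdsWithin tstar (Set.Iio tstar)) Filter.atBot) : False := by
  set l := nhdsWithin tstar (Set.Iio tstar) with hl
  haveI : l.NeBot := nhdsLT_neBot tstar
  have ev1 : ∀ᶠ t in l, t ∈ Set.Ioo a tstar :=
    Ioo_mem_nhdsLT_of_mem ⟨hat, le_refl _⟩
  have ev2 : ∀ᶠ t in l, c * L t + G t = C := ev1.mono fun t ht => hFdef t ht
  have ev3 : ∀ᶠ t in l, |G t| ≤ B := ev1.mono fun t ht => hGbd t ht
  have h4 : Filter.Tendsto (fun t => |c| * |L t|) l Filter.atTop :=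
    (tendsto_abs_atBot_atTop.comp hL).const_mul_atTop (abs_pos.2 hc)
  have ev4 : ∀ᶠ t in l, |C| + B + 1 ≤ |c| * |L t| := h4.eventually_ge_atTop _
  obtain ⟨t, h2, h3, h4'⟩ := (ev2.and (ev3.and ev4)).exists
  have heq : c * L t = C - G t := by linarith [h2]
  have h5 : |c * L t| ≤ |C| + |G t| := by
    rw [heq]; exact (abs_sub C (G t))
  rw [abs_mul] at h5
  linarith [h3, h4']


lemma collapse_case {a tstar : ℝ} (hat : a < tstar) {c1 c2 c3 m M : ℝ} {u1 u2 u3 : ℝ → ℂ}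
    (hc1 : c1 ≠ 0) (hm : 0 < m)
    (hconst : ∀ t1 ∈ Set.Ioo a tstar, ∀ t2 ∈ Set.Ioo a tstar,
      c1 * Real.log (Complex.normSq (u1 t1)) + c2 * Real.log (Complex.normSq (u2 t1))
        + c3 * Real.log (Complex.normSq (u3 t1))
      = c1 * Real.log (Complex.normSq (u1 t2)) + c2 * Real.log (Complex.normSq (u2 t2))
        + c3 * Real.log (Complex.normSq (u3 t2)))
    (hb2 : ∀ t ∈ Set.Ioo a tstar, m ≤ ‖u2 t‖ ∧ ‖u2 t‖ ≤ M)
    (hb3 : ∀ t ∈ Set.Ioo a tstar, m ≤ ‖u3 t‖ ∧ ‖u3 t‖ ≤ M)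
    (hne : ∀ t ∈ Set.Ioo a tstar, u1 t ≠ 0)
    (hcol : Filter.Tendsto (fun t => ‖u1 t‖)
      (nhdsWithin tstar (Set.Iio tstar)) (nhds 0)) : False := by
  have ht0 : (a + tstar) / 2 ∈ Set.Ioo a tstar := ⟨by linarith, by linarith⟩
  set t0 := (a + tstar) / 2
  set K := max |Real.log (m ^ 2)| |Real.log (M ^ 2)| with hK
  refine endgame (L := fun t => Real.log (Complex.normSq (u1 t)))
    (G := fun t => c2 * Real.log (Complex.normSq (u2 t)) + c3 * Real.log (Complex.normSq (u3 t)))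
    (C := c1 * Real.log (Complex.normSq (u1 t0)) + c2 * Real.log (Complex.normSq (u2 t0))
        + c3 * Real.log (Complex.normSq (u3 t0)))
    (B := |c2| * K + |c3| * K) hat hc1 ?_ ?_ ?_
  · intro t ht
    have := hconst t ht t0 ht0
    linarith
  · intro t ht
    have b2 := logns_bound hm (hb2 t ht).1 (hb2 t ht).2
    have b3 := logns_bound hm (hb3 t ht).1 (hb3 t ht).2
    have m2 : |c2| * |Real.log (Complex.normSq (u2 t))| ≤ |c2| * K :=
      mul_le_mul_of_nonneg_left b2 (abs_nonneg _)
    have m3 : |c3| * |Real.log (Complex.normSq (u3 t))| ≤ |c3| * K :=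
      mul_le_mul_of_nonneg_left b3 (abs_nonneg _)
    calc |c2 * Real.log (Complex.normSq (u2 t)) + c3 * Real.log (Complex.normSq (u3 t))|
        ≤ |c2 * Real.log (Complex.normSq (u2 t))| + |c3 * Real.log (Complex.normSq (u3 t))| :=
          abs_add_le _ _
      _ ≤ |c2| * K + |c3| * K := by rw [abs_mul, abs_mul]; exact add_le_add m2 m3
  · refine tendsto_log_normSq_atBot hcol ?_
    have ev1 : ∀ᶠ t in nhdsWithin tstar (Set.Iio tstar), t ∈ Set.Ioo a tstar :=
      Ioo_mem_nhdsLT_of_mem ⟨hat, le_refl _⟩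
    exact ev1.mono fun t ht => hne t ht


/-- No partial (two-vortex) collapse for three vortices with
`γ₁γ₂ + γ₂γ₃ + γ₁γ₃ = 0`: if exactly one pairwise distance tends to `0` at the
finite time `t*` while the other pairwise distances stay bounded away from `0`
and `∞`, we get a contradiction. -/
theorem pv_no_partial_collapse (γ : Fin 3 → ℝ) (hγ : ∀ i, γ i ≠ 0)
    (hc : γ 0 * γ 1 + γ 1 * γ 2 + γ 0 * γ 2 = 0)
    (a tstar : ℝ) (hat : a < tstar) (x : ℝ → Fin 3 → ℂ)
    (hx : IsPVSolution γ (Set.Ioo a tstar) x)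
    (j k : Fin 3) (hjk : j ≠ k)
    (hcollide : Filter.Tendsto (fun t => ‖x t j - x t k‖)
      (nhdsWithin tstar (Set.Iio tstar)) (nhds 0))
    (hothers : ∃ m M : ℝ, 0 < m ∧
      ∀ t ∈ Set.Ioo a tstar, ∀ p q : Fin 3, p ≠ q → ({p, q} : Set (Fin 3)) ≠ {j, k} →
        m ≤ ‖x t p - x t q‖ ∧ ‖x t p - x t q‖ ≤ M) :
    False := by
  obtain ⟨hdist, hderiv⟩ := hx
  obtain ⟨m, M, hm, hbnd⟩ := hothers
  have nsymm : ∀ w w' : ℂ, Complex.normSq (w - w') = Complex.normSq (w' - w) := fun w w' => by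
    rw [← Complex.normSq_neg, neg_sub]
  have hF0 : ∀ t ∈ Set.Ioo a tstar, HasDerivAt (fun τ =>
      γ 0 * γ 1 * Real.log (Complex.normSq (x τ 0 - x τ 1))
      + γ 1 * γ 2 * Real.log (Complex.normSq (x τ 1 - x τ 2))
      + γ 0 * γ 2 * Real.log (Complex.normSq (x τ 0 - x τ 2))) 0 t := by
    intro t ht
    have h01 : x t 0 ≠ x t 1 := hdist t ht 0 1 (by decide)
    have h02 : x t 0 ≠ x t 2 := hdist t ht 0 2 (by decide)
    have h12 : x t 1 ≠ x t 2 := hdist t ht 1 2 (by decide)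
    have w01 := (hderiv t ht 0).sub (hderiv t ht 1)
    have w12 := (hderiv t ht 1).sub (hderiv t ht 2)
    have w02 := (hderiv t ht 0).sub (hderiv t ht 2)
    have L01 := hasDerivAt_log_normSq w01 (sub_ne_zero.2 h01)
    have L12 := hasDerivAt_log_normSq w12 (sub_ne_zero.2 h12)
    have L02 := hasDerivAt_log_normSq w02 (sub_ne_zero.2 h02)
    have hd := ((L01.const_mul (γ 0 * γ 1)).add (L12.const_mul (γ 1 * γ 2))).add
      (L02.const_mul (γ 0 * γ 2))
    simp only [Pi.sub_apply] at hd
    rw [key γ (x t) h01 h02 h12] at hd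
    exact hd
  have hconst : ∀ t1 ∈ Set.Ioo a tstar, ∀ t2 ∈ Set.Ioo a tstar,
      γ 0 * γ 1 * Real.log (Complex.normSq (x t1 0 - x t1 1))
      + γ 1 * γ 2 * Real.log (Complex.normSq (x t1 1 - x t1 2))
      + γ 0 * γ 2 * Real.log (Complex.normSq (x t1 0 - x t1 2))
      = γ 0 * γ 1 * Real.log (Complex.normSq (x t2 0 - x t2 1))
      + γ 1 * γ 2 * Real.log (Complex.normSq (x t2 1 - x t2 2))
      + γ 0 * γ 2 * Real.log (Complex.normSq (x t2 0 - x t2 2)) := by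
    have mono : ∀ t1 ∈ Set.Ioo a tstar, ∀ t2 ∈ Set.Ioo a tstar, t1 ≤ t2 →
        (fun τ => γ 0 * γ 1 * Real.log (Complex.normSq (x τ 0 - x τ 1))
          + γ 1 * γ 2 * Real.log (Complex.normSq (x τ 1 - x τ 2))
          + γ 0 * γ 2 * Real.log (Complex.normSq (x τ 0 - x τ 2))) t2
        = (fun τ => γ 0 * γ 1 * Real.log (Complex.normSq (x τ 0 - x τ 1))
          + γ 1 * γ 2 * Real.log (Complex.normSq (x τ 1 - x τ 2))
          + γ 0 * γ 2 * Real.log (Complex.normSq (x τ 0 - x τ 2))) t1 := by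
      intro t1 ht1 t2 ht2 h12
      have hsub : Set.Icc t1 t2 ⊆ Set.Ioo a tstar := fun s hs =>
        ⟨ht1.1.trans_le hs.1, lt_of_le_of_lt hs.2 ht2.2⟩
      exact constant_of_has_deriv_right_zero
        (fun s hs => (hF0 s (hsub hs)).continuousAt.continuousWithinAt)
        (fun s hs => (hF0 s (hsub ⟨hs.1, le_of_lt hs.2⟩)).hasDerivWithinAt)
        t2 ⟨h12, le_refl _⟩
    intro t1 ht1 t2 ht2
    rcases le_total t1 t2 with h | h
    · exact (mono t1 ht1 t2 ht2 h).symm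
    · exact mono t2 ht2 t1 ht1 h
  have hcases := (show ∀ j k : Fin 3, j ≠ k →
      (j = 0 ∧ k = 1) ∨ (j = 0 ∧ k = 2) ∨ (j = 1 ∧ k = 0) ∨ (j = 1 ∧ k = 2)
        ∨ (j = 2 ∧ k = 0) ∨ (j = 2 ∧ k = 1) by decide) j k hjk
  rcases hcases with ⟨hj, hk⟩ | ⟨hj, hk⟩ | ⟨hj, hk⟩ | ⟨hj, hk⟩ | ⟨hj, hk⟩ | ⟨hj, hk⟩ <;>
    subst hj <;> subst hk
  -- case (0,1)
  · refine collapse_case (u1 := fun t => x t 0 - x t 1) (u2 := fun t => x t 1 - x t 2)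
      (u3 := fun t => x t 0 - x t 2) (c1 := γ 0 * γ 1) (c2 := γ 1 * γ 2) (c3 := γ 0 * γ 2) (M := M)
      hat (mul_ne_zero (hγ 0) (hγ 1)) hm ?_ ?_ ?_ ?_ hcollide
    · intro t1 ht1 t2 ht2; simpa using hconst t1 ht1 t2 ht2
    · intro t ht; exact hbnd t ht 1 2 (by decide) (by simp [Set.pair_eq_pair_iff])
    · intro t ht; exact hbnd t ht 0 2 (by decide) (by simp [Set.pair_eq_pair_iff])
    · intro t ht; exact sub_ne_zero.2 (hdist t ht 0 1 (by decide))
  -- case (0,2)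
  · refine collapse_case (u1 := fun t => x t 0 - x t 2) (u2 := fun t => x t 0 - x t 1)
      (u3 := fun t => x t 1 - x t 2) (c1 := γ 0 * γ 2) (c2 := γ 0 * γ 1) (c3 := γ 1 * γ 2) (M := M)
      hat (mul_ne_zero (hγ 0) (hγ 2)) hm ?_ ?_ ?_ ?_ hcollide
    · intro t1 ht1 t2 ht2; have := hconst t1 ht1 t2 ht2; linarith
    · intro t ht; exact hbnd t ht 0 1 (by decide) (by simp [Set.pair_eq_pair_iff])
    · intro t ht; exact hbnd t ht 1 2 (by decide) (by simp [Set.pair_eq_pair_iff])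
    · intro t ht; exact sub_ne_zero.2 (hdist t ht 0 2 (by decide))
  -- case (1,0)
  · refine collapse_case (u1 := fun t => x t 1 - x t 0) (u2 := fun t => x t 1 - x t 2)
      (u3 := fun t => x t 0 - x t 2) (c1 := γ 0 * γ 1) (c2 := γ 1 * γ 2) (c3 := γ 0 * γ 2) (M := M)
      hat (mul_ne_zero (hγ 0) (hγ 1)) hm ?_ ?_ ?_ ?_ hcollide
    · intro t1 ht1 t2 ht2
      simp only [nsymm (x t1 1) (x t1 0), nsymm (x t2 1) (x t2 0)]
      exact hconst t1 ht1 t2 ht2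
    · intro t ht; exact hbnd t ht 1 2 (by decide) (by simp [Set.pair_eq_pair_iff])
    · intro t ht; exact hbnd t ht 0 2 (by decide) (by simp [Set.pair_eq_pair_iff])
    · intro t ht; exact sub_ne_zero.2 (hdist t ht 1 0 (by decide))
  -- case (1,2)
  · refine collapse_case (u1 := fun t => x t 1 - x t 2) (u2 := fun t => x t 0 - x t 1)
      (u3 := fun t => x t 0 - x t 2) (c1 := γ 1 * γ 2) (c2 := γ 0 * γ 1) (c3 := γ 0 * γ 2) (M := M)
      hat (mul_ne_zero (hγ 1) (hγ 2)) hm ?_ ?_ ?_ ?_ hcollide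
    · intro t1 ht1 t2 ht2; have := hconst t1 ht1 t2 ht2; linarith
    · intro t ht; exact hbnd t ht 0 1 (by decide) (by simp [Set.pair_eq_pair_iff])
    · intro t ht; exact hbnd t ht 0 2 (by decide) (by simp [Set.pair_eq_pair_iff])
    · intro t ht; exact sub_ne_zero.2 (hdist t ht 1 2 (by decide))
  -- case (2,0)
  · refine collapse_case (u1 := fun t => x t 2 - x t 0) (u2 := fun t => x t 0 - x t 1)
      (u3 := fun t => x t 1 - x t 2) (c1 := γ 0 * γ 2) (c2 := γ 0 * γ 1) (c3 := γ 1 * γ 2) (M := M)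
      hat (mul_ne_zero (hγ 0) (hγ 2)) hm ?_ ?_ ?_ ?_ hcollide
    · intro t1 ht1 t2 ht2
      simp only [nsymm (x t1 2) (x t1 0), nsymm (x t2 2) (x t2 0)]
      have := hconst t1 ht1 t2 ht2; linarith
    · intro t ht; exact hbnd t ht 0 1 (by decide) (by simp [Set.pair_eq_pair_iff])
    · intro t ht; exact hbnd t ht 1 2 (by decide) (by simp [Set.pair_eq_pair_iff])
    · intro t ht; exact sub_ne_zero.2 (hdist t ht 2 0 (by decide))
  -- case (2,1)
  · refine collapse_case (u1 := fun t => x t 2 - x t 1) (u2 := fun t => x t 0 - x t 1)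
      (u3 := fun t => x t 0 - x t 2) (c1 := γ 1 * γ 2) (c2 := γ 0 * γ 1) (c3 := γ 0 * γ 2) (M := M)
      hat (mul_ne_zero (hγ 1) (hγ 2)) hm ?_ ?_ ?_ ?_ hcollide
    · intro t1 ht1 t2 ht2
      simp only [nsymm (x t1 2) (x t1 1), nsymm (x t2 2) (x t2 1)]
      have := hconst t1 ht1 t2 ht2; linarith
    · intro t ht; exact hbnd t ht 0 1 (by decide) (by simp [Set.pair_eq_pair_iff])
    · intro t ht; exact hbnd t ht 0 2 (by decide) (by simp [Set.pair_eq_pair_iff])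
    · intro t ht; exact sub_ne_zero.2 (hdist t ht 2 1 (by decide))
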